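/- arXiv:1808.08797 — 9 statements merged into one kernel-verified Lean document; each statement's English description precedes it below -/
import Mathlib

section
/- If A is a d-by-d matrix with nonnegative real entries such that the sum A_{1,σ(1)} + ... + A_{d,σ(d)} equals N for every permutation σ of {1,...,d}, then there exist nonnegative reals λ_1,...,λ_d and μ_1,...,μ_d with λ_1+...+λ_d+μ_1+...+μ_d = N such that A_{ij} = μ_i + λ_j for all i,j. -/
/-! Transposing two entries of a permutation leaves the permutation sum unchanged, so
`A i j + A i' j' = A i j' + A i' j` for all `i, i', j, j'`. Fixing a column `j₀` and a row `i₁`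
where that column is smallest, `A i j = (A i j₀ - A i₁ j₀) + A i₁ j` splits `A` into nonnegative
row and column labels, and evaluating on the identity permutation gives their total `N`. -/

open Finset Equiv

theorem Equiv.Perm.exists_apply_eq_and_apply_eq {α : Type*} [DecidableEq α] {i i' j j' : α}
    (hi : i ≠ i') (hj : j ≠ j') : ∃ σ : Perm α, σ i = j ∧ σ i' = j' := by
  refine ⟨swap (swap i j i') j' * swap i j, ?_, by simp⟩
  have hji : j ≠ swap i j i' := by
    simpa only [swap_apply_left] using (swap i j).injective.ne hi
  simp [swap_apply_of_ne_of_ne hji hj]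

namespace Matrix

variable {ι m n α : Type*}

theorem add_add_eq_of_forall_perm_sum_eq [Fintype ι] [DecidableEq ι] [AddCancelCommMonoid α]
    (A : Matrix ι ι α) (N : α) (hsum : ∀ σ : Perm ι, ∑ i, A i (σ i) = N) (i i' j j' : ι) :
    A i j + A i' j' = A i j' + A i' j := by
  rcases eq_or_ne i i' with rfl | hi
  · exact add_comm _ _
  rcases eq_or_ne j j' with rfl | hj
  · rfl
  obtain ⟨σ, hσi, hσi'⟩ := Perm.exists_apply_eq_and_apply_eq hi hj
  have hsplit (τ : Perm ι) :
      ∑ k ∈ {i, i'}ᶜ, A k (τ k) + (A i (τ i) + A i' (τ i')) = N := by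
    rw [← sum_pair (f := fun k => A k (τ k)) hi, sum_compl_add_sum, hsum]
  have hoff : ∑ k ∈ {i, i'}ᶜ, A k ((σ * Equiv.swap i i') k) = ∑ k ∈ {i, i'}ᶜ, A k (σ k) := by
    refine sum_congr rfl fun k hk => ?_
    simp only [mem_compl, mem_insert, mem_singleton, not_or] at hk
    rw [Perm.mul_apply, swap_apply_of_ne_of_ne hk.1 hk.2]
  have h := (hsplit σ).trans (hsplit (σ * Equiv.swap i i')).symm
  rw [hoff, Perm.mul_apply, Perm.mul_apply, swap_apply_left, swap_apply_right, hσi, hσi'] at h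
  exact add_left_cancel h

theorem exists_nonneg_add_of_add_add_eq [Finite m] [AddCommGroup α] [LinearOrder α]
    [IsOrderedAddMonoid α] (A : Matrix m n α) (hpos : ∀ i j, 0 ≤ A i j)
    (hA : ∀ i i' j j', A i j + A i' j' = A i j' + A i' j) :
    ∃ lam : n → α, ∃ mu : m → α, (∀ j, 0 ≤ lam j) ∧ (∀ i, 0 ≤ mu i) ∧
      ∀ i j, A i j = mu i + lam j := by
  cases isEmpty_or_nonempty m
  · exact ⟨0, 0, fun _ => le_rfl, fun _ => le_rfl, fun i => isEmptyElim i⟩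
  cases isEmpty_or_nonempty n
  · exact ⟨0, 0, fun _ => le_rfl, fun _ => le_rfl, fun _ j => isEmptyElim j⟩
  obtain ⟨j₀⟩ := ‹Nonempty n›
  obtain ⟨i₁, hi₁⟩ := Finite.exists_min fun i => A i j₀
  refine ⟨fun j => A i₁ j, fun i => A i j₀ - A i₁ j₀, fun j => hpos i₁ j,
    fun i => sub_nonneg.2 (hi₁ i), fun i j => ?_⟩
  rw [sub_add_eq_add_sub, ← hA i i₁ j j₀, add_sub_cancel_right]

end Matrix

theorem stmt_0_general (d : ℕ) (N : ℝ)
    (A : Matrix (Fin d) (Fin d) ℝ) (hpos : ∀ i j, 0 ≤ A i j)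
    (hsum : ∀ σ : Equiv.Perm (Fin d), ∑ i, A i (σ i) = N) :
    ∃ lam mu : Fin d → ℝ, (∀ j, 0 ≤ lam j) ∧ (∀ i, 0 ≤ mu i) ∧
      (∑ j, lam j) + (∑ i, mu i) = N ∧ ∀ i j, A i j = mu i + lam j := by
  obtain ⟨lam, mu, hlam, hmu, hA⟩ := A.exists_nonneg_add_of_add_add_eq hpos
    (A.add_add_eq_of_forall_perm_sum_eq N hsum)
  refine ⟨lam, mu, hlam, hmu, ?_, hA⟩
  calc (∑ j, lam j) + ∑ i, mu i = ∑ i, A i i := by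
        rw [add_comm, ← sum_add_distrib]; exact sum_congr rfl fun i _ => (hA i i).symm
    _ = N := hsum 1

theorem stmt_0 (d : ℕ) (hd : 2 ≤ d) (N : ℝ) (hN : 0 ≤ N)
    (A : Matrix (Fin d) (Fin d) ℝ) (hpos : ∀ i j, 0 ≤ A i j)
    (hsum : ∀ σ : Equiv.Perm (Fin d), ∑ i, A i (σ i) = N) :
    ∃ lam mu : Fin d → ℝ, (∀ j, 0 ≤ lam j) ∧ (∀ i, 0 ≤ mu i) ∧
      (∑ j, lam j) + (∑ i, mu i) = N ∧ ∀ i j, A i j = mu i + lam j :=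
  stmt_0_general d N A hpos hsum
end

section
/- Let A be a d-by-d nonnegative real matrix such that all diagonal sums ∑_i A_{i,σ(i)} over permutations σ are equal, and suppose every column and every row of A contains a zero entry. Then A is the zero matrix. -/
/-!
If a permutation sends rows `a ≠ b` to columns `k ≠ l`, exchanging these two images changes the
diagonal sum by `A a l + A b k - A a k - A b l`; every such pair of columns arises this way, so
constant diagonal sums force `A a k + A b l = A a l + A b k`. Given an entry `A i j`, pick zeros
`A i₀ j = 0` and `A i j₀ = 0`; then `A i j + A i₀ j₀ = 0` with both terms nonnegative.
-/

open Equiv Finset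

namespace Equiv.Perm

variable {n : Type*} [DecidableEq n]

theorem exists_apply_eq_and_apply_eq_s2 {a b k l : n} (hab : a ≠ b) (hkl : k ≠ l) :
    ∃ σ : Perm n, σ a = k ∧ σ b = l := by
  have hbk : swap a k b ≠ k := fun h => hab (by simpa using congrArg (swap a k) h : b = a).symm
  refine ⟨swap (swap a k b) l * swap a k, ?_, ?_⟩
  · simpa using swap_apply_of_ne_of_ne hbk.symm hkl
  · simp

end Equiv.Perm

section DiagonalSums

variable {n R : Type*} [Fintype n] [DecidableEq n]

theorem sum_apply_mul_swap_add [AddCancelCommMonoid R] (A : n → n → R)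
    (σ : Perm n) {a b : n} (hab : a ≠ b) :
    (∑ i, A i ((σ * swap a b) i)) + (A a (σ a) + A b (σ b)) =
      (∑ i, A i (σ i)) + (A a (σ b) + A b (σ a)) := by
  have hsplit : ∀ f : n → R, ∑ i, f i = f a + f b + ∑ i ∈ univ \ {a, b}, f i := fun f => by
    rw [← sum_sdiff (subset_univ {a, b}), sum_pair hab, add_comm]
  have htail : ∑ i ∈ univ \ {a, b}, A i ((σ * swap a b) i) = ∑ i ∈ univ \ {a, b}, A i (σ i) := by
    refine sum_congr rfl fun i hi => ?_
    have ⟨hia, hib⟩ : i ≠ a ∧ i ≠ b := by simpa [not_or] using hi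
    rw [Perm.mul_apply, swap_apply_of_ne_of_ne hia hib]
  rw [hsplit (fun i => A i ((σ * swap a b) i)), hsplit (fun i => A i (σ i)), htail]
  simp only [Perm.mul_apply, swap_apply_left, swap_apply_right]
  abel

theorem add_eq_add_of_diag_sums_eq [AddCancelCommMonoid R] (A : n → n → R)
    (hsum : ∀ σ τ : Perm n, ∑ i, A i (σ i) = ∑ i, A i (τ i))
    {a b k l : n} (hab : a ≠ b) (hkl : k ≠ l) :
    A a k + A b l = A a l + A b k := by
  obtain ⟨σ, rfl, rfl⟩ := Perm.exists_apply_eq_and_apply_eq_s2 hab hkl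
  have h := sum_apply_mul_swap_add A σ hab
  rw [hsum (σ * swap a b) σ, add_left_cancel_iff] at h
  rw [h, add_comm]

end DiagonalSums

theorem stmt_2_general (d : ℕ)
    (A : Matrix (Fin d) (Fin d) ℝ) (hpos : ∀ i j, 0 ≤ A i j)
    (hsum : ∀ σ τ : Equiv.Perm (Fin d), ∑ i, A i (σ i) = ∑ i, A i (τ i))
    (hcol : ∀ j, ∃ i, A i j = 0) (hrow : ∀ i, ∃ j, A i j = 0) :
    A = 0 := by
  ext i j
  obtain ⟨i₀, hi₀⟩ := hcol j
  obtain ⟨j₀, hj₀⟩ := hrow i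
  rcases eq_or_ne i i₀ with rfl | hi
  · exact hi₀
  rcases eq_or_ne j j₀ with rfl | hj
  · exact hj₀
  have h := add_eq_add_of_diag_sums_eq A hsum hi hj
  rw [hi₀, hj₀, add_zero] at h
  exact ((add_eq_zero_iff_of_nonneg (hpos i j) (hpos i₀ j₀)).mp h).1

theorem stmt_2 (d : ℕ) (hd : 2 ≤ d)
    (A : Matrix (Fin d) (Fin d) ℝ) (hpos : ∀ i j, 0 ≤ A i j)
    (hsum : ∀ σ τ : Equiv.Perm (Fin d), ∑ i, A i (σ i) = ∑ i, A i (τ i))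
    (hcol : ∀ j, ∃ i, A i j = 0) (hrow : ∀ i, ∃ j, A i j = 0) :
    A = 0 :=
  stmt_2_general d A hpos hsum hcol hrow
end

section
/- The Gardner polytope G_d, consisting of nonnegative d×d real matrices all of whose permutation-diagonal sums equal 1, is exactly the convex hull of the 2d matrices R_1,...,R_d, C_1,...,C_d. -/
/-!
Comparing the diagonal sums of `σ` and `σ * swap i i'` gives the exchange identity
`A i j + A i' j' = A i j' + A i' j`, so `A i j = c i + e j`. Taking `e j = A i₀ j - min_j A i₀ j`
makes `c, e ≥ 0`, and the identity permutation gives `∑ c + ∑ e = 1`; hence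
`A = ∑ c i • R i + ∑ e j • C j` is a convex combination. Conversely every `R i`, `C j` lies in the
convex set `G_d`.
-/

open Finset Equiv

namespace Equiv.Perm

theorem exists_apply_eq_and_apply_eq_s6 {α : Type*} [DecidableEq α] {a b x y : α}
    (hab : a ≠ b) (hxy : x ≠ y) : ∃ σ : Perm α, σ a = x ∧ σ b = y := by
  refine ⟨swap (swap a x b) y * swap a x, ?_, ?_⟩
  · have hx : swap a x b ≠ x := by
      simpa using (swap a x).injective.ne hab.symm
    simp [swap_apply_of_ne_of_ne hx.symm hxy]
  · simp

end Equiv.Perm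

namespace Matrix

variable {ι : Type*} [Fintype ι]

def gardnerPolytope (ι : Type*) [Fintype ι] : Set (Matrix ι ι ℝ) :=
  {A | (∀ i j, 0 ≤ A i j) ∧ ∀ σ : Perm ι, ∑ i, A i (σ i) = 1}

theorem convex_gardnerPolytope : Convex ℝ (gardnerPolytope ι) := by
  rintro A ⟨hA₀, hA⟩ B ⟨hB₀, hB⟩ a b ha hb hab
  refine ⟨fun i j => ?_, fun σ => ?_⟩
  · have := hA₀ i j
    have := hB₀ i j
    simp only [add_apply, smul_apply, smul_eq_mul]
    positivity
  · simp only [add_apply, smul_apply, smul_eq_mul, sum_add_distrib, ← mul_sum, hA, hB]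
    linarith

variable [DecidableEq ι] {A : Matrix ι ι ℝ} {s : ℝ}

theorem exchange_of_forall_perm_sum_eq (hA : ∀ σ : Perm ι, ∑ i, A i (σ i) = s)
    (σ : Perm ι) (a b : ι) : A a (σ a) + A b (σ b) = A a (σ b) + A b (σ a) := by
  rcases eq_or_ne a b with rfl | hab
  · rfl
  have hdiff : ∑ k, (A k (σ k) - A k ((σ * Equiv.swap a b) k)) = 0 := by
    rw [sum_sub_distrib, hA, hA, sub_self]
  rw [Fintype.sum_eq_add a b hab fun k hk => by
    simp [Equiv.swap_apply_of_ne_of_ne hk.1 hk.2]] at hdiff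
  simp only [Perm.mul_apply, swap_apply_left, swap_apply_right] at hdiff
  linarith

theorem add_eq_add_of_forall_perm_sum_eq (hA : ∀ σ : Perm ι, ∑ i, A i (σ i) = s)
    (i i' j j' : ι) : A i j + A i' j' = A i j' + A i' j := by
  rcases eq_or_ne i i' with rfl | hi
  · ring
  rcases eq_or_ne j j' with rfl | hj
  · ring
  obtain ⟨σ, rfl, rfl⟩ := Perm.exists_apply_eq_and_apply_eq_s6 hi hj
  exact exchange_of_forall_perm_sum_eq hA σ i i'

theorem exists_eq_add_of_forall_perm_sum_eq [Nonempty ι] (h0 : ∀ i j, 0 ≤ A i j)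
    (hA : ∀ σ : Perm ι, ∑ i, A i (σ i) = s) :
    ∃ c e : ι → ℝ, (∀ i, 0 ≤ c i) ∧ (∀ j, 0 ≤ e j) ∧ ∀ i j, A i j = c i + e j := by
  let i₀ : ι := Classical.arbitrary ι
  obtain ⟨j₀, hj₀⟩ := Finite.exists_min (A i₀)
  refine ⟨fun i => A i j₀, fun j => A i₀ j - A i₀ j₀, fun i => h0 i j₀,
    fun j => sub_nonneg.2 (hj₀ j), fun i j => ?_⟩
  linarith [add_eq_add_of_forall_perm_sum_eq hA i i₀ j j₀]

def rowOnes (i : ι) : Matrix ι ι ℝ := of fun k _ => if k = i then 1 else 0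

def colOnes (j : ι) : Matrix ι ι ℝ := of fun _ l => if l = j then 1 else 0

theorem rowOnes_mem_gardnerPolytope (i : ι) : rowOnes i ∈ gardnerPolytope ι :=
  ⟨fun _ _ => ite_nonneg zero_le_one le_rfl, fun _ => by simp [rowOnes]⟩

theorem colOnes_mem_gardnerPolytope (j : ι) : colOnes j ∈ gardnerPolytope ι :=
  ⟨fun _ _ => ite_nonneg zero_le_one le_rfl,
    fun σ => by simp [colOnes, ← Equiv.eq_symm_apply]⟩

theorem of_add_mem_convexHull {c e : ι → ℝ} (hc : ∀ i, 0 ≤ c i) (he : ∀ j, 0 ≤ e j)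
    (hce : ∑ i, c i + ∑ j, e j = 1) :
    of (fun i j => c i + e j) ∈ convexHull ℝ (Set.range rowOnes ∪ Set.range colOnes) := by
  have hmem := (convex_convexHull ℝ (Set.range rowOnes ∪ Set.range colOnes)).sum_mem
    (t := univ) (w := Sum.elim c e) (z := Sum.elim rowOnes colOnes)
    (fun p _ => by cases p <;> simp [hc, he])
    (by rwa [Fintype.sum_sum_type])
    (fun p _ => subset_convexHull ℝ _ <| by
      cases p
      · exact Or.inl ⟨_, rfl⟩
      · exact Or.inr ⟨_, rfl⟩)
  convert hmem using 1
  ext k l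
  simp [Fintype.sum_sum_type, rowOnes, colOnes, sum_apply]

theorem gardnerPolytope_eq_convexHull :
    gardnerPolytope ι = convexHull ℝ (Set.range rowOnes ∪ Set.range colOnes) := by
  refine subset_antisymm ?_ (convexHull_min ?_ convex_gardnerPolytope)
  · rintro A ⟨hA₀, hA⟩
    have : Nonempty ι := by
      by_contra h
      simpa [not_nonempty_iff.1 h] using hA 1
    obtain ⟨c, e, hc, he, hce⟩ := exists_eq_add_of_forall_perm_sum_eq hA₀ hA
    have htrace : ∑ i, c i + ∑ j, e j = 1 := by
      simpa [← sum_add_distrib, hce] using hA 1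
    convert of_add_mem_convexHull hc he htrace
    ext i j
    exact hce i j
  · rintro _ (⟨i, rfl⟩ | ⟨j, rfl⟩)
    exacts [rowOnes_mem_gardnerPolytope i, colOnes_mem_gardnerPolytope j]

end Matrix

theorem stmt_6_general (d : ℕ)
    (R C : Fin d → Matrix (Fin d) (Fin d) ℝ)
    (hR : ∀ i k l, R i k l = if k = i then 1 else 0)
    (hC : ∀ j k l, C j k l = if l = j then 1 else 0) :
    {A : Matrix (Fin d) (Fin d) ℝ | (∀ i j, 0 ≤ A i j) ∧
        ∀ σ : Equiv.Perm (Fin d), ∑ i, A i (σ i) = 1}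
      = convexHull ℝ (Set.range R ∪ Set.range C) := by
  obtain rfl : R = Matrix.rowOnes := funext fun i => Matrix.ext (hR i)
  obtain rfl : C = Matrix.colOnes := funext fun j => Matrix.ext (hC j)
  exact Matrix.gardnerPolytope_eq_convexHull

theorem stmt_6 (d : ℕ) (hd : 2 ≤ d)
    (R C : Fin d → Matrix (Fin d) (Fin d) ℝ)
    (hR : ∀ i k l, R i k l = if k = i then 1 else 0)
    (hC : ∀ j k l, C j k l = if l = j then 1 else 0) :
    {A : Matrix (Fin d) (Fin d) ℝ | (∀ i j, 0 ≤ A i j) ∧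
        ∀ σ : Equiv.Perm (Fin d), ∑ i, A i (σ i) = 1}
      = convexHull ℝ (Set.range R ∪ Set.range C) :=
  stmt_6_general d R C hR hC
end

section
/- The number of d×d matrices with nonnegative integer entries all of whose permutation-diagonal sums equal N is g_d(N) = C(N+2d−1, 2d−1) − C(N+d−1, 2d−1). -/
/-!
A matrix all of whose permutation-diagonal sums equal `N` satisfies the exchange relation
`A i j + A k l = A i l + A k j` (compare `σ` with `σ` composed with a transposition), hence is an
outer sum `A i j = r i + c j` of weights `r, c : ι → ℕ` of total `N`. The representation becomes
unique once some `c j` vanishes. So the count is the number of weight vectors `(r, c) ∈ ℕ^{2d}`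
of total `N`, `C(N + 2d - 1, 2d - 1)` by stars and bars, minus those with every `c j ≥ 1`; removing
one from each `c j` identifies the latter with weight vectors of total `N - d`.
-/

open Finset

section StarsAndBars

variable {β : Type*} [Fintype β]

theorem Set.finite_setOf_sum_eq (N : ℕ) : {P : β → ℕ | ∑ b, P b = N}.Finite := by
  classical
  exact Set.finite_coe_iff.mp (Finite.of_equiv _ (Sym.equivNatSumOfFintype β N))

theorem Set.ncard_setOf_sum_eq [Nonempty β] (N : ℕ) :
    {P : β → ℕ | ∑ b, P b = N}.ncard = (N + Fintype.card β - 1).choose (Fintype.card β - 1) := by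
  classical
  change Nat.card {P : β → ℕ // ∑ b, P b = N} = _
  rw [Nat.card_congr (Sym.equivNatSumOfFintype β N).symm, Nat.card_eq_fintype_card,
    Sym.card_sym_eq_choose, add_comm]
  have := Fintype.card_pos (α := β)
  exact Nat.choose_symm_of_eq_add (by omega)

theorem Set.ncard_setOf_sum_eq_add_and_le [Nonempty β] (m : β → ℕ) (K : ℕ) :
    {P : β → ℕ | ∑ b, P b = K + ∑ b, m b ∧ m ≤ P}.ncard
      = (K + Fintype.card β - 1).choose (Fintype.card β - 1) := by
  have hshift : {P : β → ℕ | ∑ b, P b = K + ∑ b, m b ∧ m ≤ P}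
      = (· + m) '' {Q : β → ℕ | ∑ b, Q b = K} := by
    ext P
    simp only [Set.mem_ofPred_eq, Set.mem_image]
    constructor
    · rintro ⟨hsum, hle⟩
      refine ⟨P - m, ?_, tsub_add_cancel_of_le hle⟩
      have := Finset.sum_tsub_distrib Finset.univ fun b _ => hle b
      simp only [Pi.sub_apply]
      omega
    · rintro ⟨Q, rfl, rfl⟩
      exact ⟨by simp [Finset.sum_add_distrib], le_add_self⟩
  rw [hshift, Set.ncard_image_of_injective _ (add_left_injective m), Set.ncard_setOf_sum_eq]

theorem Set.ncard_setOf_sum_eq_and_exists_inr_eq_zero {ι : Type*} [Fintype ι] [Nonempty ι]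
    (N : ℕ) :
    {P : ι ⊕ ι → ℕ | ∑ x, P x = N ∧ ∃ j, P (.inr j) = 0}.ncard
      = (N + 2 * Fintype.card ι - 1).choose (2 * Fintype.card ι - 1)
        - (N + Fintype.card ι - 1).choose (2 * Fintype.card ι - 1) := by
  set c := Fintype.card ι
  have hc_pos : 0 < c := Fintype.card_pos
  set m : ι ⊕ ι → ℕ := Sum.elim 0 1
  have hm : ∑ x, m x = c := by simp [m, Fintype.sum_sum_type, c]
  have hsplit : {P : ι ⊕ ι → ℕ | ∑ x, P x = N ∧ ∃ j, P (.inr j) = 0}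
      = {P | ∑ x, P x = N} \ {P | ∑ x, P x = N ∧ m ≤ P} := by
    ext P
    simp only [Set.mem_ofPred_eq, Set.mem_sdiff, not_and, Pi.le_def, Sum.forall, m, Sum.elim_inl,
      Sum.elim_inr, Pi.zero_apply, Pi.one_apply, zero_le, implies_true, true_and,
      Nat.one_le_iff_ne_zero, not_forall, not_not]
    tauto
  have hpos : {P : ι ⊕ ι → ℕ | ∑ x, P x = N ∧ m ≤ P}.ncard
      = (N + c - 1).choose (2 * c - 1) := by
    rcases le_or_gt c N with hcN | hNc
    · obtain ⟨K, rfl⟩ := Nat.exists_eq_add_of_le' hcN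
      rw [← hm, Set.ncard_setOf_sum_eq_add_and_le, hm, Fintype.card_sum]
      congr 1 <;> omega
    · have hempty : {P : ι ⊕ ι → ℕ | ∑ x, P x = N ∧ m ≤ P} = ∅ := by
        refine Set.eq_empty_iff_forall_notMem.mpr ?_
        rintro P ⟨hsum, hle⟩
        have := Finset.sum_le_sum fun x (_ : x ∈ Finset.univ) => hle x
        omega
      rw [hempty, Set.ncard_empty, Nat.choose_eq_zero_of_lt (by omega)]
  rw [hsplit, Set.ncard_sdiff' (fun P hP => hP.1) (Set.finite_setOf_sum_eq N), hpos,
    Set.ncard_setOf_sum_eq, Fintype.card_sum, ← two_mul]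

end StarsAndBars

theorem Equiv.Perm.exists_apply_eq_and_apply_eq_s9 {ι : Type*} [DecidableEq ι] {i k j l : ι}
    (hik : i ≠ k) (hjl : j ≠ l) : ∃ σ : Perm ι, σ i = j ∧ σ k = l := by
  have hk : swap i j k ≠ j := by
    rw [Ne, swap_apply_eq_iff, swap_apply_right]
    exact hik.symm
  exact ⟨swap (swap i j k) l * swap i j, by simp [swap_apply_of_ne_of_ne hk.symm hjl], by simp⟩

namespace Matrix

variable {ι α : Type*}

theorem sum_perm_mul_swap_add [Fintype ι] [DecidableEq ι] [AddCommMonoid α] (A : Matrix ι ι α)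
    (σ : Equiv.Perm ι) {i k : ι} (hik : i ≠ k) :
    ∑ m, A m ((σ * Equiv.swap i k) m) + (A i (σ i) + A k (σ k))
      = ∑ m, A m (σ m) + (A i (σ k) + A k (σ i)) := by
  rw [← sum_add_sum_compl {i, k}, ← sum_add_sum_compl {i, k} (fun m => A m (σ m)),
    sum_pair hik, sum_pair hik]
  have hrest : ∑ m ∈ {i, k}ᶜ, A m ((σ * Equiv.swap i k) m) = ∑ m ∈ {i, k}ᶜ, A m (σ m) := by
    refine sum_congr rfl fun m hm => ?_
    simp only [mem_compl, mem_insert, mem_singleton, not_or] at hm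
    simp [Equiv.swap_apply_of_ne_of_ne hm.1 hm.2]
  rw [hrest]
  simp only [Equiv.Perm.mul_apply, Equiv.swap_apply_left, Equiv.swap_apply_right]
  abel

theorem add_eq_add_of_forall_perm_sum_eq_s9 [Fintype ι] [DecidableEq ι] [AddCancelCommMonoid α]
    {A : Matrix ι ι α} {N : α} (hA : ∀ σ : Equiv.Perm ι, ∑ i, A i (σ i) = N) (i k j l : ι) :
    A i j + A k l = A i l + A k j := by
  rcases eq_or_ne i k with rfl | hik
  · exact add_comm _ _
  rcases eq_or_ne j l with rfl | hjl
  · rfl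
  obtain ⟨σ, rfl, rfl⟩ := Equiv.Perm.exists_apply_eq_and_apply_eq_s9 hik hjl
  have := sum_perm_mul_swap_add A σ hik
  rwa [hA, hA, add_right_inj] at this

def outerSum [Add α] (P : ι ⊕ ι → α) : Matrix ι ι α :=
  of fun i j => P (.inl i) + P (.inr j)

theorem sum_outerSum_perm [Fintype ι] [AddCommMonoid α] (P : ι ⊕ ι → α) (σ : Equiv.Perm ι) :
    ∑ i, outerSum P i (σ i) = ∑ x, P x := by
  simp [outerSum, sum_add_distrib, Fintype.sum_sum_type, Equiv.sum_comp σ (fun j => P (.inr j))]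

theorem injOn_outerSum : Set.InjOn (outerSum (ι := ι) (α := ℕ)) {P | ∃ j, P (.inr j) = 0} := by
  rintro P ⟨j, hj⟩ Q ⟨j', hj'⟩ hPQ
  have h i j : P (.inl i) + P (.inr j) = Q (.inl i) + Q (.inr j) := congrFun (congrFun hPQ i) j
  have hrow i : P (.inl i) = Q (.inl i) := by
    have := h i j
    have := h i j'
    omega
  funext x
  rcases x with i | j''
  · exact hrow i
  · have := h j j''
    rw [hrow] at this
    omega

theorem exists_outerSum_eq [Fintype ι] [DecidableEq ι] [Nonempty ι] {A : Matrix ι ι ℕ} {N : ℕ}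
    (hA : ∀ σ : Equiv.Perm ι, ∑ i, A i (σ i) = N) :
    ∃ P : ι ⊕ ι → ℕ, (∃ j, P (.inr j) = 0) ∧ outerSum P = A := by
  obtain ⟨z⟩ := ‹Nonempty ι›
  obtain ⟨j₀, -, hmin⟩ := exists_min_image univ (A z) univ_nonempty
  -- row weights: column `j₀`; column weights: excess of row `z` over its minimum `A z j₀`
  refine ⟨Sum.elim (fun i => A i j₀) (fun j => A z j - A z j₀), ⟨j₀, by simp⟩, ?_⟩
  ext i j
  have := add_eq_add_of_forall_perm_sum_eq_s9 hA i z j₀ j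
  have := hmin j (mem_univ j)
  simp only [outerSum, of_apply, Sum.elim_inl, Sum.elim_inr]
  omega

theorem setOf_forall_perm_sum_eq_image_outerSum [Fintype ι] [DecidableEq ι] [Nonempty ι]
    (N : ℕ) :
    {A : Matrix ι ι ℕ | ∀ σ : Equiv.Perm ι, ∑ i, A i (σ i) = N}
      = outerSum '' {P | ∑ x, P x = N ∧ ∃ j, P (.inr j) = 0} := by
  ext A
  constructor
  · intro hA
    obtain ⟨P, hP, rfl⟩ := exists_outerSum_eq hA
    exact ⟨P, ⟨(sum_outerSum_perm P 1).symm.trans (hA 1), hP⟩, rfl⟩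
  · rintro ⟨P, ⟨hsum, -⟩, rfl⟩ σ
    rw [sum_outerSum_perm, hsum]

end Matrix

theorem stmt_9 (d N : ℕ) (hd : 1 ≤ d) :
    Nat.card {A : Matrix (Fin d) (Fin d) ℕ |
        ∀ σ : Equiv.Perm (Fin d), ∑ i, A i (σ i) = N}
      = Nat.choose (N + 2 * d - 1) (2 * d - 1) - Nat.choose (N + d - 1) (2 * d - 1) := by
  have : Nonempty (Fin d) := Fin.pos_iff_nonempty.mp hd
  rw [Nat.card_coe_set_eq, Matrix.setOf_forall_perm_sum_eq_image_outerSum,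
    (Matrix.injOn_outerSum.mono fun _ hP => hP.2).ncard_image,
    Set.ncard_setOf_sum_eq_and_exists_inr_eq_zero, Fintype.card_fin]
end

section
/- The number of d×d matrices with nonnegative integer entries all of whose permutation-diagonal sums equal N equals ∑_{j=0}^{d−1} C(N + 2d − 2 − j, 2d−2). -/
/-!
Swapping the images of two points under a permutation shows that all permutation sums of `A` agree
exactly when `A i j + A i' j' = A i j' + A i' j` for all `i, i', j, j'`, i.e. when
`A i j = r i + c j`. Over `ℕ` the pair `(r, c)` is unique once `min c = 0`, and its total mass
`∑ r + ∑ c` is the common permutation sum `N`. By stars and bars there are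
`C(N + 2d - 1, 2d - 1)` pairs of mass `N`; those with `c > 0` everywhere correspond, after
subtracting `1` from every `c j`, to pairs of mass `N - d`, and there are `C(N + d - 1, 2d - 1)` of
them. The hockey-stick identity writes the difference as the stated sum.
-/

open Finset Equiv

theorem Nat.sum_range_choose_sub_add_choose (m k : ℕ) {d : ℕ} (hd : d ≤ m + 1) :
    ∑ j ∈ range d, (m - j).choose k + (m + 1 - d).choose (k + 1) = (m + 1).choose (k + 1) := by
  induction d with
  | zero => simp
  | succ d ih =>
    rw [sum_range_succ, add_assoc, show m + 1 - (d + 1) = m - d by omega, ← ih (by omega),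
      show m + 1 - d = m - d + 1 by omega, Nat.choose_succ_succ']

theorem Nat.card_subtype_and_add_card_subtype_and_not {α : Type*} (p q : α → Prop)
    [Finite {a // p a}] :
    Nat.card {a // p a ∧ q a} + Nat.card {a // p a ∧ ¬q a} = Nat.card {a // p a} := by
  classical
  rw [← Nat.card_congr (subtypeSubtypeEquivSubtypeInter p q),
    ← Nat.card_congr (subtypeSubtypeEquivSubtypeInter p (¬q ·)), ← Nat.card_sum,
    Nat.card_congr (sumCompl _)]

section StarsAndBars

variable (α : Type*) [Fintype α]

instance finite_subtype_sum_eq (n : ℕ) : Finite {f : α → ℕ // ∑ i, f i = n} := by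
  classical exact Finite.of_equiv _ (Sym.equivNatSumOfFintype α n)

theorem card_subtype_sum_eq (n : ℕ) :
    Nat.card {f : α → ℕ // ∑ i, f i = n} = (Fintype.card α + n - 1).choose n := by
  classical
  rw [← Nat.card_congr (Sym.equivNatSumOfFintype α n), Nat.card_eq_fintype_card,
    Sym.card_sym_eq_choose]

def subtypeSumEqAddEquiv (w : α → ℕ) (n : ℕ) :
    {f : α → ℕ // ∑ i, f i = n + ∑ i, w i ∧ w ≤ f} ≃ {g : α → ℕ // ∑ i, g i = n} where
  toFun f := ⟨f.1 - w, by
    simp only [Pi.sub_apply]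
    rw [sum_tsub_distrib univ fun i _ => f.2.2 i, f.2.1, Nat.add_sub_cancel]⟩
  invFun g := ⟨g.1 + w, by simp only [Pi.add_apply, sum_add_distrib, g.2], le_add_self⟩
  left_inv f := Subtype.ext (tsub_add_cancel_of_le f.2.2)
  right_inv g := Subtype.ext (add_tsub_cancel_right _ _)

theorem card_subtype_sum_eq_and_forall_inr_pos [Nonempty α] (N : ℕ) :
    Nat.card {f : α ⊕ α → ℕ // ∑ k, f k = N ∧ ∀ j, 0 < f (.inr j)}
      = (N + Fintype.card α - 1).choose (2 * Fintype.card α - 1) := by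
  have hd : 0 < Fintype.card α := Fintype.card_pos
  let w : α ⊕ α → ℕ := Sum.elim 0 1
  have hw : ∑ k, w k = Fintype.card α := by simp [w, Fintype.sum_sum_type]
  have hpos : ∀ f : α ⊕ α → ℕ, (∀ j, 0 < f (.inr j)) ↔ w ≤ f := fun f => by
    simp [w, Pi.le_def, Sum.forall, Nat.one_le_iff_ne_zero, Nat.pos_iff_ne_zero]
  rcases le_or_gt (Fintype.card α) N with hdN | hNd
  · obtain ⟨n, rfl⟩ : ∃ n, N = n + Fintype.card α := ⟨N - Fintype.card α, by omega⟩
    have e : {f : α ⊕ α → ℕ // ∑ k, f k = n + Fintype.card α ∧ ∀ j, 0 < f (.inr j)}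
        ≃ {g : α ⊕ α → ℕ // ∑ k, g k = n} :=
      (subtypeEquivRight fun f => by rw [hpos, hw]).trans (subtypeSumEqAddEquiv _ w n)
    rw [Nat.card_congr e, card_subtype_sum_eq, Fintype.card_sum,
      Nat.choose_symm_of_eq_add (b := 2 * Fintype.card α - 1) (by omega)]
    congr 1
    omega
  · rw [Nat.choose_eq_zero_of_lt (by omega)]
    refine Nat.card_eq_zero.2 (.inl ⟨fun ⟨f, hsum, hf⟩ => ?_⟩)
    have : ∑ _j : α, 1 ≤ ∑ j, f (.inr j) := sum_le_sum fun j _ => hf j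
    simp only [sum_const, card_univ, smul_eq_mul, mul_one, Fintype.sum_sum_type] at this hsum
    omega

end StarsAndBars

namespace Matrix

/-- The matrix `r i + c j` for row weights `r = f ∘ inl` and column weights `c = f ∘ inr`. -/
def rowColAdd {m n : Type*} (f : m ⊕ n → ℕ) : Matrix m n ℕ :=
  of fun i j => f (.inl i) + f (.inr j)

theorem rowColAdd_injOn {m n : Type*} [Nonempty m] :
    Set.InjOn (rowColAdd (m := m) (n := n)) {f | ∃ j, f (.inr j) = 0} := by
  rintro f ⟨j₀, hj₀⟩ g ⟨j₁, hj₁⟩ h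
  have hfg : ∀ i j, f (.inl i) + f (.inr j) = g (.inl i) + g (.inr j) := fun i j =>
    congrFun (congrFun h i) j
  have hrow : ∀ i, f (.inl i) = g (.inl i) := fun i => by
    have := hfg i j₀; have := hfg i j₁; omega
  obtain ⟨i⟩ := ‹Nonempty m›
  funext k
  rcases k with i' | j
  · exact hrow i'
  · have := hfg i j; have := hrow i; omega

variable {ι : Type*} [Fintype ι]

theorem sum_rowColAdd_perm (f : ι ⊕ ι → ℕ) (σ : Perm ι) :
    ∑ i, rowColAdd f i (σ i) = ∑ k, f k := by
  simp only [rowColAdd, of_apply, sum_add_distrib, Equiv.sum_comp σ fun j => f (.inr j),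
    Fintype.sum_sum_type]

variable [DecidableEq ι]

theorem add_apply_eq_of_forall_sum_perm_eq {M : Type*} [AddCancelCommMonoid M]
    {A : Matrix ι ι M} {N : M} (hA : ∀ σ : Perm ι, ∑ i, A i (σ i) = N) (i i' j j' : ι) :
    A i j + A i' j' = A i j' + A i' j := by
  rcases eq_or_ne i i' with rfl | hi
  · exact add_comm _ _
  rcases eq_or_ne j j' with rfl | hj
  · rfl
  obtain ⟨σ, hσi, hσi'⟩ := Perm.exists_apply_eq_and_apply_eq hi hj
  set τ : Perm ι := σ * Equiv.swap i i' with hτ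
  have hrest : ∀ k ∈ ({i, i'} : Finset ι)ᶜ, A k (τ k) = A k (σ k) := by
    intro k hk
    simp only [mem_compl, mem_insert, mem_singleton, not_or] at hk
    rw [hτ, Perm.mul_apply, swap_apply_of_ne_of_ne hk.1 hk.2]
  have key := (hA σ).trans (hA τ).symm
  rw [← sum_add_sum_compl {i, i'}, ← sum_add_sum_compl {i, i'} fun k => A k (τ k),
    sum_pair hi, sum_pair hi, sum_congr rfl hrest] at key
  simpa [hτ, Perm.mul_apply, hσi, hσi'] using add_right_cancel key

theorem exists_rowColAdd_eq_of_forall_sum_perm_eq [Nonempty ι] {A : Matrix ι ι ℕ} {N : ℕ}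
    (hA : ∀ σ : Perm ι, ∑ i, A i (σ i) = N) :
    ∃ f : ι ⊕ ι → ℕ, (∃ j, f (.inr j) = 0) ∧ rowColAdd f = A := by
  obtain ⟨i₀⟩ := ‹Nonempty ι›
  obtain ⟨j₀, hj₀⟩ := Finite.exists_min (A i₀)
  refine ⟨Sum.elim (fun i => A i j₀) fun j => A i₀ j - A i₀ j₀, ⟨j₀, Nat.sub_self _⟩, ?_⟩
  ext i j
  have := add_apply_eq_of_forall_sum_perm_eq hA i i₀ j j₀
  have := hj₀ j
  simp only [rowColAdd, of_apply, Sum.elim_inl, Sum.elim_inr]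
  omega

noncomputable def forallSumPermEqEquiv [Nonempty ι] (N : ℕ) :
    {f : ι ⊕ ι → ℕ // ∑ k, f k = N ∧ ∃ j, f (.inr j) = 0}
      ≃ {A : Matrix ι ι ℕ // ∀ σ : Perm ι, ∑ i, A i (σ i) = N} :=
  Equiv.ofBijective (fun f => ⟨rowColAdd f.1, fun σ => (sum_rowColAdd_perm f.1 σ).trans f.2.1⟩)
    ⟨fun f g h => Subtype.ext (rowColAdd_injOn f.2.2 g.2.2 (congrArg Subtype.val h)),
      fun A => by
        obtain ⟨f, hf, hfA⟩ := exists_rowColAdd_eq_of_forall_sum_perm_eq A.2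
        refine ⟨⟨f, (sum_rowColAdd_perm f 1).symm.trans ?_, hf⟩, Subtype.ext hfA⟩
        rw [hfA]
        exact A.2 1⟩

theorem card_forall_sum_perm_eq_add_choose [Nonempty ι] (N : ℕ) :
    Nat.card {A : Matrix ι ι ℕ // ∀ σ : Perm ι, ∑ i, A i (σ i) = N}
        + (N + Fintype.card ι - 1).choose (2 * Fintype.card ι - 1)
      = (N + 2 * Fintype.card ι - 1).choose (2 * Fintype.card ι - 1) := by
  have hsplit := Nat.card_subtype_and_add_card_subtype_and_not
    (fun f : ι ⊕ ι → ℕ => ∑ k, f k = N) fun f => ∃ j, f (.inr j) = 0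
  simp only [not_exists, ← Nat.pos_iff_ne_zero] at hsplit
  rw [Nat.card_congr (forallSumPermEqEquiv N), card_subtype_sum_eq_and_forall_inr_pos,
    card_subtype_sum_eq, Fintype.card_sum] at hsplit
  have hd : 0 < Fintype.card ι := Fintype.card_pos
  rw [hsplit, Nat.choose_symm_of_eq_add (b := 2 * Fintype.card ι - 1) (by omega)]
  congr 1
  omega

end Matrix

theorem stmt_10 (d N : ℕ) (hd : 1 ≤ d) :
    Nat.card {A : Matrix (Fin d) (Fin d) ℕ |
        ∀ σ : Equiv.Perm (Fin d), ∑ i, A i (σ i) = N}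
      = ∑ j ∈ Finset.range d, Nat.choose (N + 2 * d - 2 - j) (2 * d - 2) := by
  have : Nonempty (Fin d) := ⟨⟨0, hd⟩⟩
  have hcount := Matrix.card_forall_sum_perm_eq_add_choose (ι := Fin d) N
  have hockey := Nat.sum_range_choose_sub_add_choose (N + 2 * d - 2) (2 * d - 2) (d := d) (by omega)
  rw [Fintype.card_fin] at hcount
  rw [show N + 2 * d - 2 + 1 = N + 2 * d - 1 by omega, show N + 2 * d - 1 - d = N + d - 1 by omega,
    show 2 * d - 2 + 1 = 2 * d - 1 by omega] at hockey
  rw [Set.coe_ofPred]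
  omega
end

section
/- For all integers d ≥ 1 and N ≥ 0, ∑_{k=1}^{d} (−1)^{k−1} C(d,k) C(N + 2d − k − 1, 2d − k − 1) = C(N+2d−1, 2d−1) − C(N+d−1, 2d−1). -/
/-!
Reflecting `k ↦ d - k` turns the full alternating sum over `0 ≤ k ≤ d` into the `d`-th forward
difference of `x ↦ C(x, N)` at `N + d - 1`. Since `Δ C(x, j + 1) = C(x, j)`, this is
`C(N + d - 1, N - d) = C(N + d - 1, 2d - 1)` when `d ≤ N`, and `0` otherwise. The sum in the
theorem is this full sum with the `k = 0` term `C(N + 2d - 1, 2d - 1)` split off and the sign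
flipped.
-/
open Finset fwdDiff

lemma sum_Icc_neg_one_pow_pred_mul {R : Type*} [CommRing R] (f : ℕ → R) (n : ℕ) :
    ∑ k ∈ Icc 1 n, (-1) ^ (k - 1) * f k = f 0 - ∑ k ∈ range (n + 1), (-1) ^ k * f k := by
  rw [range_eq_Ico, sum_eq_sum_Ico_succ_bot n.succ_pos, ← Ico_add_one_right_eq_Icc,
    pow_zero, one_mul, sub_add_cancel_left, ← sum_neg_distrib]
  refine sum_congr rfl fun k hk ↦ ?_
  obtain ⟨j, rfl⟩ := Nat.exists_eq_add_of_le (mem_Ico.mp hk).1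
  rw [Nat.add_sub_cancel_left, add_comm, pow_succ]
  ring

lemma fwdDiff_iter_choose_eq_zero_of_lt {n k : ℕ} (h : n < k) :
    Δ_[1] ^[k] (fun x ↦ x.choose n : ℕ → ℤ) = 0 := by
  obtain ⟨m, rfl⟩ := Nat.exists_eq_add_of_lt h
  have hconst : Δ_[1] ^[n] (fun x ↦ x.choose n : ℕ → ℤ) = fun _ ↦ 1 := by
    simpa using fwdDiff_iter_choose 0 n
  rw [show n + m + 1 = m + 1 + n by ring, Function.iterate_add_apply, hconst,
    Function.iterate_succ_apply, fwdDiff_const]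
  exact Function.iterate_fixed (fwdDiff_const 1 0) m

lemma alternating_sum_choose_eq_fwdDiff_iter {d : ℕ} (hd : 1 ≤ d) (N : ℕ) :
    ∑ k ∈ range (d + 1), (-1) ^ k * ((d.choose k : ℤ) * (N + 2 * d - k - 1).choose (2 * d - k - 1))
      = Δ_[1] ^[d] (fun x ↦ x.choose N : ℕ → ℤ) (N + d - 1) := by
  rw [fwdDiff_iter_eq_sum_shift, ← sum_range_reflect]
  refine sum_congr rfl fun j hj ↦ ?_
  have hjd : j ≤ d := Nat.lt_succ_iff.mp (mem_range.mp hj)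
  rw [show d + 1 - 1 - j = d - j by omega, show N + 2 * d - (d - j) - 1 = N + (d + j - 1) by omega,
    show 2 * d - (d - j) - 1 = d + j - 1 by omega,
    show N + d - 1 + j • 1 = N + (d + j - 1) by simp; omega,
    ← Nat.choose_symm_add, Nat.choose_symm hjd, smul_eq_mul]
  ring

lemma fwdDiff_iter_choose_apply_add_sub_one {d : ℕ} (hd : 1 ≤ d) (N : ℕ) :
    Δ_[1] ^[d] (fun x ↦ x.choose N : ℕ → ℤ) (N + d - 1) = (N + d - 1).choose (2 * d - 1) := by
  rcases le_or_gt d N with hdN | hNd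
  · obtain ⟨j, rfl⟩ := Nat.exists_eq_add_of_le hdN
    rw [fwdDiff_iter_choose]
    exact congrArg Nat.cast (Nat.choose_symm_of_eq_add (by omega))
  · rw [fwdDiff_iter_choose_eq_zero_of_lt hNd, Nat.choose_eq_zero_of_lt (by omega), Pi.zero_apply,
      Nat.cast_zero]

theorem stmt_12 (d N : ℕ) (hd : 1 ≤ d) :
    ∑ k ∈ Finset.Icc 1 d, (-1 : ℤ) ^ (k - 1) * (Nat.choose d k) *
        (Nat.choose (N + 2 * d - k - 1) (2 * d - k - 1))
      = (Nat.choose (N + 2 * d - 1) (2 * d - 1) : ℤ)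
        - (Nat.choose (N + d - 1) (2 * d - 1) : ℤ) := by
  simp_rw [mul_assoc]
  rw [sum_Icc_neg_one_pow_pred_mul, alternating_sum_choose_eq_fwdDiff_iter hd,
    fwdDiff_iter_choose_apply_add_sub_one hd]
  simp
end

section
/- For all integers d ≥ 1 and N ≥ 1, ∑_{m=1}^{2d−1} [C(2d,m) − C(d, m−d)] C(N−1, m−1) = C(N+2d−1, 2d−1) − C(N+d−1, 2d−1). -/
/-!
Both sums are Vandermonde convolutions. Shifting `m = i + 1`, the first is
`∑ C(N-1, i) C(2d, 1+i) = C(N+2d-1, N)`; shifting `m = d + t`, the second is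
`∑ C(d, t) C(N-1, (d-1)+t) = C(N+d-1, 2d-1)`. The summand vanishes at `m = 2d`, so the sum may
be taken up to `2d`, where both convolutions are complete.
-/

open Finset

namespace Nat

theorem sum_range_succ_choose_mul_choose_add (a b c : ℕ) :
    ∑ i ∈ range (a + 1), a.choose i * b.choose (c + i) = (a + b).choose (a + c) := by
  calc ∑ i ∈ range (a + 1), a.choose i * b.choose (c + i)
      = ∑ j ∈ range (a + 1), a.choose j * b.choose (a + c - j) := by
        rw [← sum_range_reflect]
        refine sum_congr rfl fun j hj => ?_
        rw [mem_range] at hj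
        rw [← choose_symm (by omega : j ≤ a)]
        congr 2; omega
    _ = ∑ j ∈ range (a + c + 1), a.choose j * b.choose (a + c - j) :=
        sum_subset (range_subset_range.2 (by omega)) fun j _ hja => by
          rw [mem_range, not_lt] at hja
          rw [choose_eq_zero_of_lt (by omega), zero_mul]
    _ = (a + b).choose (a + c) := by
        rw [add_choose_eq, Nat.sum_antidiagonal_eq_sum_range_succ_mk]

theorem sum_range_choose_mul_choose_add {a b c K : ℕ} (h : a < K ∨ b < c + K) :
    ∑ i ∈ range K, a.choose i * b.choose (c + i) = (a + b).choose (a + c) := by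
  rw [← sum_range_succ_choose_mul_choose_add]
  rcases lt_or_ge a K with haK | hKa
  · refine (sum_subset (range_subset_range.2 haK) fun i _ hi => ?_).symm
    rw [mem_range, not_lt] at hi
    rw [choose_eq_zero_of_lt (by omega), zero_mul]
  · refine sum_subset (range_subset_range.2 (by omega)) fun i _ hi => ?_
    rw [mem_range, not_lt] at hi
    rw [choose_eq_zero_of_lt (k := c + i) (by omega), mul_zero]

theorem sum_Icc_one_choose_mul_choose_sub_one (k n : ℕ) :
    ∑ m ∈ Icc 1 k, k.choose m * n.choose (m - 1) = (n + k).choose (n + 1) := by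
  rw [← Ico_add_one_right_eq_Icc, sum_Ico_eq_sum_range, add_tsub_cancel_right]
  simp_rw [add_tsub_cancel_left, mul_comm (k.choose _)]
  exact sum_range_choose_mul_choose_add (Or.inr (by omega))

theorem sum_Icc_choose_sub_mul_choose_sub_one {d : ℕ} (hd : 1 ≤ d) (n : ℕ) :
    ∑ m ∈ Icc d (2 * d), d.choose (m - d) * n.choose (m - 1) = (n + d).choose (2 * d - 1) := by
  rw [← Ico_add_one_right_eq_Icc, sum_Ico_eq_sum_range, show 2 * d + 1 - d = d + 1 by omega]
  have key := sum_range_choose_mul_choose_add (a := d) (b := n) (c := d - 1) (K := d + 1) (by omega)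
  rw [add_comm d n, show d + (d - 1) = 2 * d - 1 by omega] at key
  rw [← key]
  refine sum_congr rfl fun i _ => ?_
  rw [add_tsub_cancel_left]
  congr 2; omega

end Nat

theorem stmt_13 (d N : ℕ) (hd : 1 ≤ d) (hN : 1 ≤ N) :
    ∑ m ∈ Finset.Icc 1 (2 * d - 1),
        ((Nat.choose (2 * d) m : ℤ) - (if d ≤ m then (Nat.choose d (m - d) : ℤ) else 0)) *
          (Nat.choose (N - 1) (m - 1) : ℤ)
      = (Nat.choose (N + 2 * d - 1) (2 * d - 1) : ℤ)
        - (Nat.choose (N + d - 1) (2 * d - 1) : ℤ) := by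
  have hA := Nat.sum_Icc_one_choose_mul_choose_sub_one (2 * d) (N - 1)
  rw [Nat.choose_symm_of_eq_add (show N - 1 + 2 * d = N - 1 + 1 + (2 * d - 1) by omega),
    show N - 1 + 2 * d = N + 2 * d - 1 by omega] at hA
  have hB := Nat.sum_Icc_choose_sub_mul_choose_sub_one hd (N - 1)
  rw [show N - 1 + d = N + d - 1 by omega] at hB
  have hfilter : (Icc 1 (2 * d)).filter (d ≤ ·) = Icc d (2 * d) := by
    ext m; simp only [mem_filter, mem_Icc]; omega
  rw [sum_subset (Icc_subset_Icc_right (by omega : 2 * d - 1 ≤ 2 * d)) fun m hm hm' => ?top]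
  case top =>
    obtain rfl : m = 2 * d := by simp only [mem_Icc] at hm hm'; omega
    simp [if_pos (by omega : d ≤ 2 * d), show 2 * d - d = d by omega]
  simp only [sub_mul, sum_sub_distrib, ite_mul, zero_mul, ← sum_filter]
  rw [hfilter, ← hA, ← hB]
  push_cast
  rfl
end

section
/- A d×d matrix A with nonnegative integer entries has all permutation-diagonal sums equal to N if and only if there exist nonnegative integers μ_1,...,μ_d and λ_1,...,λ_d with ∑μ_i + ∑λ_j = N and A_{ij} = μ_i + λ_j for all i,j. -/
/-!
Constancy of the permutation-diagonal sums forces the exchange identity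
`A i j + A i' j' = A i j' + A i' j`: choose `σ` with `σ i = j`, `σ i' = j'` and compare it with
`σ ∘ swap i i'`. Over `ℕ` the exchange identity gives `A i j = A i j₀ + (A i₀ j - A i₀ j₀)`,
where `j₀` minimises row `i₀`, so the subtraction is honest. Conversely `A i j = u i + v j` makes
every diagonal sum equal `∑ u + ∑ v`, which also identifies `N` in the forward direction.
-/

open Finset Equiv

theorem Equiv.Perm.exists_apply_eq_apply_eq {ι : Type*} {i i' j j' : ι} (hi : i ≠ i')
    (hj : j ≠ j') :
    ∃ σ : Perm ι, σ i = j ∧ σ i' = j' := by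
  have injective_pair : ∀ {a b : ι}, a ≠ b → Function.Injective ![a, b] := by
    intro a b hab x y
    fin_cases x <;> fin_cases y <;> simp [hab, hab.symm]
  obtain ⟨σ, hσ⟩ := Perm.exists_extending_pair _ _ (injective_pair hi) (injective_pair hj)
  exact ⟨σ, hσ 0, hσ 1⟩

section

variable {ι M : Type*} [Fintype ι]

theorem Matrix.add_add_eq_add_add_of_sum_perm_eq [AddCancelCommMonoid M] {A : Matrix ι ι M}
    {c : M} (h : ∀ σ : Perm ι, ∑ k, A k (σ k) = c) (i i' j j' : ι) :
    A i j + A i' j' = A i j' + A i' j := by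
  classical
  rcases eq_or_ne i i' with rfl | hi
  · exact add_comm _ _
  rcases eq_or_ne j j' with rfl | hj
  · rfl
  obtain ⟨σ, hσi, hσi'⟩ := Perm.exists_apply_eq_apply_eq hi hj
  have sum_split : ∀ τ : Perm ι, (∀ k ∉ ({i, i'} : Finset ι), τ k = σ k) →
      c = A i (τ i) + A i' (τ i') + ∑ k ∈ {i, i'}ᶜ, A k (σ k) := by
    intro τ hτ
    rw [← h τ, ← sum_add_sum_compl {i, i'}, sum_pair hi]
    congr 1
    exact sum_congr rfl fun k hk => by rw [hτ k (mem_compl.1 hk)]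
  have hσ := sum_split σ fun _ _ => rfl
  have hστ := sum_split (σ * Equiv.swap i i') fun k hk => by
    simp only [mem_insert, mem_singleton, not_or] at hk
    simp [Equiv.swap_apply_of_ne_of_ne hk.1 hk.2]
  simp only [Perm.mul_apply, swap_apply_left, swap_apply_right, hσi, hσi'] at hσ hστ
  exact add_right_cancel (hσ.symm.trans hστ)

theorem Matrix.sum_perm_eq_of_eq_add [AddCommMonoid M] {A : Matrix ι ι M} {u v : ι → M}
    (hA : ∀ i j, A i j = u i + v j) (σ : Perm ι) :
    ∑ i, A i (σ i) = ∑ i, u i + ∑ j, v j := by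
  simp only [hA, sum_add_distrib, Equiv.sum_comp σ v]

end

theorem Matrix.exists_eq_add_of_add_add_eq_add_add {ι κ : Type*} [Finite κ]
    {A : Matrix ι κ ℕ} (h : ∀ i i' j j', A i j + A i' j' = A i j' + A i' j) :
    ∃ (u : ι → ℕ) (v : κ → ℕ), ∀ i j, A i j = u i + v j := by
  rcases isEmpty_or_nonempty ι with hι | ⟨⟨i₀⟩⟩
  · exact ⟨0, 0, fun i => isEmptyElim i⟩
  rcases isEmpty_or_nonempty κ with hκ | _
  · exact ⟨0, 0, fun _ j => isEmptyElim j⟩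
  obtain ⟨j₀, hj₀⟩ := Finite.exists_min (A i₀)
  refine ⟨fun i => A i j₀, fun j => A i₀ j - A i₀ j₀, fun i j => ?_⟩
  have exchange := h i i₀ j j₀
  have row_min := hj₀ j
  dsimp only
  omega

theorem stmt_14_general (d N : ℕ) (A : Matrix (Fin d) (Fin d) ℕ) :
    (∀ σ : Equiv.Perm (Fin d), ∑ i, A i (σ i) = N) ↔
      ∃ mu lam : Fin d → ℕ, (∑ i, mu i) + (∑ j, lam j) = N ∧
        ∀ i j, A i j = mu i + lam j := by
  constructor
  · intro h
    obtain ⟨mu, lam, hA⟩ :=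
      Matrix.exists_eq_add_of_add_add_eq_add_add (Matrix.add_add_eq_add_add_of_sum_perm_eq h)
    refine ⟨mu, lam, ?_, hA⟩
    rw [← h 1, Matrix.sum_perm_eq_of_eq_add hA]
  · rintro ⟨mu, lam, hsum, hA⟩ σ
    rw [Matrix.sum_perm_eq_of_eq_add hA, hsum]

theorem stmt_14 (d N : ℕ) (hd : 2 ≤ d) (A : Matrix (Fin d) (Fin d) ℕ) :
    (∀ σ : Equiv.Perm (Fin d), ∑ i, A i (σ i) = N) ↔
      ∃ mu lam : Fin d → ℕ, (∑ i, mu i) + (∑ j, lam j) = N ∧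
        ∀ i j, A i j = mu i + lam j :=
  stmt_14_general d N A
end

section
/- The number of ways to write N as μ_1 + ... + μ_d + λ_1 + ... + λ_d with nonnegative integers such that min(μ_1,...,μ_d) = 0, counted via the resulting matrices A_{ij} = μ_i + λ_j, is in bijection with d×d nonnegative integer matrices all of whose permutation-diagonal sums equal N; moreover the representation with all column minima of A equal to λ_j and then row minima μ_i is unique. -/
/-!
If every permutation diagonal of `A` has the same sum, then exchanging the columns that two
rows pick out does not change that sum, which gives the rectangle rule
`A i j + A k l = A i l + A k j`. Hence every row of `A` is a fixed row plus a constant, so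
`A i j = μ i + ν j`; normalising the row attaining the minimum of a column gives `μ` the value
`0` somewhere, and the identity diagonal gives `∑ μ + ∑ ν = N`. Conversely such a normalised
decomposition is unique: `ν j` is the minimum of column `j`.
-/

open Finset

namespace Matrix

variable {n M : Type*} [Fintype n] [DecidableEq n]

theorem sum_perm_mul_swap_add_add [AddCommMonoid M] (A : Matrix n n M) (ρ : Equiv.Perm n)
    {i k : n} (hik : i ≠ k) :
    ∑ m, A m ((ρ * Equiv.swap i k) m) + (A i (ρ i) + A k (ρ k)) =
      ∑ m, A m (ρ m) + (A i (ρ k) + A k (ρ i)) := by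
  have hsub : ({i, k} : Finset n) ⊆ univ := subset_univ _
  have hrest : ∑ m ∈ univ \ {i, k}, A m ((ρ * Equiv.swap i k) m) =
      ∑ m ∈ univ \ {i, k}, A m (ρ m) := by
    refine sum_congr rfl fun m hm => ?_
    simp only [mem_sdiff, mem_insert, mem_singleton, not_or] at hm
    rw [Equiv.Perm.mul_apply, Equiv.swap_apply_of_ne_of_ne hm.2.1 hm.2.2]
  rw [← sum_sdiff hsub, ← sum_sdiff hsub (f := fun m => A m (ρ m)), sum_pair hik,
    sum_pair hik, hrest]
  simp only [Equiv.Perm.mul_apply, Equiv.swap_apply_left, Equiv.swap_apply_right]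
  abel

theorem add_add_eq_of_forall_perm_sum_eq_s15 [AddCancelCommMonoid M] {A : Matrix n n M} {N : M}
    (hA : ∀ σ : Equiv.Perm n, ∑ i, A i (σ i) = N) (i k j l : n) :
    A i j + A k l = A i l + A k j := by
  rcases eq_or_ne i k with rfl | hik
  · exact add_comm _ _
  rcases eq_or_ne j l with rfl | hjl
  · rfl
  obtain ⟨ρ, hρi, hρk⟩ := MulAction.is_two_pretransitive_iff.mp
    (Equiv.Perm.isMultiplyPretransitive n 2) hik hjl
  have key := sum_perm_mul_swap_add_add A ρ hik
  rw [hA, hA] at key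
  simp only [Equiv.Perm.smul_def] at hρi hρk
  rw [hρi, hρk] at key
  exact add_left_cancel key

end Matrix

section RankOneSum

variable {m n : Type*}

theorem exists_eq_add_of_rectangle_rule [Finite m] [Nonempty m] {A : m → n → ℕ}
    (hA : ∀ i k j l, A i j + A k l = A i l + A k j) (j₀ : n) :
    ∃ μ : m → ℕ, ∃ ν : n → ℕ, (∃ i, μ i = 0) ∧ ∀ i j, A i j = μ i + ν j := by
  obtain ⟨r, hr⟩ := Finite.exists_min fun i => A i j₀
  refine ⟨fun i => A i j₀ - A r j₀, fun j => A r j, ⟨r, Nat.sub_self _⟩, fun i j => ?_⟩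
  show A i j = A i j₀ - A r j₀ + A r j
  have := hA i r j j₀
  have := hr i
  omega

theorem eq_of_add_eq_add_of_exists_eq_zero [Nonempty n] {μ μ' : m → ℕ} {ν ν' : n → ℕ}
    (h : ∀ i j, μ i + ν j = μ' i + ν' j) (hμ : ∃ i, μ i = 0) (hμ' : ∃ i, μ' i = 0) :
    μ = μ' ∧ ν = ν' := by
  obtain ⟨p, hp⟩ := hμ
  obtain ⟨q, hq⟩ := hμ'
  have hν : ν = ν' := funext fun j => by
    have := h p j
    have := h q j
    omega
  subst hν
  exact ⟨funext fun i => Nat.add_right_cancel (h i (Classical.arbitrary n)), rfl⟩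

end RankOneSum

theorem stmt_15 (d N : ℕ) (hd : 2 ≤ d) :
    Function.Bijective
      (fun p : {p : (Fin d → ℕ) × (Fin d → ℕ) //
          (∑ i, p.1 i) + (∑ j, p.2 j) = N ∧ ∃ i, p.1 i = 0} =>
        (⟨fun i j => p.1.1 i + p.1.2 j, by
            intro σ
            have h1 : ∑ i, (p.1.1 i + p.1.2 (σ i))
                = (∑ i, p.1.1 i) + ∑ i, p.1.2 (σ i) := Finset.sum_add_distrib
            have h2 : ∑ i, p.1.2 (σ i) = ∑ j, p.1.2 j :=
              Equiv.sum_comp σ p.1.2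
            simpa [h1, h2] using p.2.1⟩ :
          {A : Matrix (Fin d) (Fin d) ℕ //
            ∀ σ : Equiv.Perm (Fin d), ∑ i, A i (σ i) = N})) := by
  have : NeZero d := ⟨by omega⟩
  constructor
  · rintro ⟨⟨μ, ν⟩, _, hμ⟩ ⟨⟨μ', ν'⟩, _, hμ'⟩ h
    obtain ⟨rfl, rfl⟩ := eq_of_add_eq_add_of_exists_eq_zero
      (fun i j => congrFun (congrFun (congrArg Subtype.val h) i) j) hμ hμ'
    rfl
  · rintro ⟨A, hA⟩
    obtain ⟨μ, ν, hμ, hA_eq⟩ := exists_eq_add_of_rectangle_rule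
      (Matrix.add_add_eq_of_forall_perm_sum_eq_s15 hA) 0
    have hsum : ∑ i, μ i + ∑ j, ν j = N := by
      rw [← sum_add_distrib, ← hA 1]
      exact sum_congr rfl fun i _ => (hA_eq i i).symm
    exact ⟨⟨(μ, ν), hsum, hμ⟩, Subtype.ext (funext₂ fun i j => (hA_eq i j).symm)⟩
end
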